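/- Optimality of the bias condition for constant average distortion: if α_n ≤ 1/n, then for the identity map f : ({-1,1}^n, Hamming metric d) → (ℝ^n, Euclidean norm), one has E_{μ⊗μ}|f(ε) - f(ε')| ≥ 2(1 - (1 - 2α_n(1-α_n))^n), where μ is the α_n-biased product measure; in particular, combined with E d(ε,ε') = 2nα_n(1-α_n) ≤ 2, the identity map (which is 2-Lipschitz from the Hamming metric to the Euclidean metric) achieves μ-average distortion bounded by a universal constant. -/

import Mathlib

open Finset

/-- weight of a point of the biased cube, encoded by `b : Fin n → Bool`. -/
noncomputable def cubeWeight (α : ℝ) {n : ℕ} (b : Fin n → Bool) : ℝ :=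
  ∏ i, if b i then α else 1 - α

/-- sign vector in Euclidean space associated to `b : Fin n → Bool`. -/
noncomputable def sgnVecE {n : ℕ} (b : Fin n → Bool) : EuclideanSpace ℝ (Fin n) :=
  WithLp.toLp 2 (fun i => if b i then 1 else -1)

/-! Distinct points of the cube differ by `±2` in some coordinate, so they are at Euclidean
distance at least `2`; hence the average distance is at least `2 · P(ε ≠ ε')`, and the
collision probability `P(ε = ε') = ∑ μ(b)²` factorises as `(α² + (1-α)²)ⁿ`. -/

theorem sum_sum_mul_ite_ne {ι : Type*} [Fintype ι] [DecidableEq ι] (w : ι → ℝ) (c : ℝ) :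
    ∑ i, ∑ j, w i * w j * (if i = j then 0 else c) = c * ((∑ i, w i) ^ 2 - ∑ i, w i ^ 2) := by
  have hsplit : ∀ i j, w i * w j * (if i = j then 0 else c)
      = c * (w i * w j) - if i = j then c * (w i * w j) else 0 := by
    intro i j; split_ifs <;> ring
  simp only [hsplit, sum_sub_distrib, sum_ite_eq, mem_univ, if_true, ← mul_sum, sq,
    sum_mul_sum, mul_sub]

theorem mul_one_sub_sum_sq_le_sum_sum_mul {ι : Type*} [Fintype ι] (w : ι → ℝ)
    (hw : ∀ i, 0 ≤ w i) (hw_sum : ∑ i, w i = 1) (D : ι → ι → ℝ) (c : ℝ)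
    (hD_diag : ∀ i, 0 ≤ D i i) (hD : ∀ i j, i ≠ j → c ≤ D i j) :
    c * (1 - ∑ i, w i ^ 2) ≤ ∑ i, ∑ j, w i * w j * D i j := by
  classical
  calc c * (1 - ∑ i, w i ^ 2)
      = ∑ i, ∑ j, w i * w j * (if i = j then 0 else c) := by
        rw [sum_sum_mul_ite_ne, hw_sum, one_pow]
    _ ≤ ∑ i, ∑ j, w i * w j * D i j := by
        gcongr with i _ j _
        · exact mul_nonneg (hw i) (hw j)
        · split_ifs with h
          · exact h ▸ hD_diag i
          · exact hD i j h

theorem two_le_norm_sgnVecE_sub {n : ℕ} {b b' : Fin n → Bool} (h : b ≠ b') :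
    2 ≤ ‖sgnVecE b - sgnVecE b'‖ := by
  obtain ⟨i, hi⟩ := Function.ne_iff.mp h
  have hcoord : ‖(sgnVecE b - sgnVecE b') i‖ = 2 := by
    cases hb : b i <;> cases hb' : b' i <;> simp_all [sgnVecE] <;> norm_num
  exact hcoord ▸ PiLp.norm_apply_le _ i

theorem cubeWeight_nonneg {α : ℝ} (hα₀ : 0 ≤ α) (hα₁ : α ≤ 1) {n : ℕ} (b : Fin n → Bool) :
    0 ≤ cubeWeight α b :=
  prod_nonneg fun i _ => by split_ifs <;> linarith

theorem sum_cubeWeight_pow (α : ℝ) (n k : ℕ) :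
    ∑ b : Fin n → Bool, cubeWeight α b ^ k = (α ^ k + (1 - α) ^ k) ^ n := by
  have hbool : α ^ k + (1 - α) ^ k = ∑ t : Bool, (if t then α else 1 - α) ^ k := by
    simp
  simp only [hbool, Fintype.sum_pow, cubeWeight, prod_pow]

theorem sum_cubeWeight (α : ℝ) (n : ℕ) : ∑ b : Fin n → Bool, cubeWeight α b = 1 := by
  simpa using sum_cubeWeight_pow α n 1

theorem sum_cubeWeight_sq (α : ℝ) (n : ℕ) :
    ∑ b : Fin n → Bool, cubeWeight α b ^ 2 = (1 - 2 * α * (1 - α)) ^ n := by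
  rw [sum_cubeWeight_pow]; ring_nf

theorem nat_mul_le_one_of_le_one_div {n : ℕ} {α : ℝ} (h : α ≤ 1 / n) : n * α ≤ 1 := by
  rcases n.eq_zero_or_pos with rfl | hn
  · simp
  · rwa [le_div_iff₀' (by exact_mod_cast hn)] at h

theorem identity_map_average_distortion_general (n : ℕ) (α : ℝ)
    (hα : α ∈ Set.Ioc (0:ℝ) (1/2)) (hαn : α ≤ 1 / n) :
    2 * (1 - (1 - 2 * α * (1 - α)) ^ n)
        ≤ ∑ b : Fin n → Bool, ∑ b' : Fin n → Bool,
            cubeWeight α b * cubeWeight α b' * ‖sgnVecE b - sgnVecE b'‖ ∧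
    2 * n * α * (1 - α) ≤ 2 := by
  obtain ⟨hα₀, hα₁⟩ := hα
  refine ⟨?_, ?_⟩
  · rw [← sum_cubeWeight_sq]
    exact mul_one_sub_sum_sq_le_sum_sum_mul _ (cubeWeight_nonneg hα₀.le (by linarith))
      (sum_cubeWeight α n) _ 2 (fun _ => norm_nonneg _) fun _ _ => two_le_norm_sgnVecE_sub
  · have hnα := nat_mul_le_one_of_le_one_div hαn
    nlinarith [mul_nonneg (Nat.cast_nonneg (α := ℝ) n) hα₀.le]

/-- for `α_n ≤ 1/n`, the identity map achieves constant average
distortion: the average Euclidean displacement is at least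
`2(1 - (1 - 2α(1-α))^n)` while the expected Hamming distance `2nα(1-α)` is at most 2. -/
theorem identity_map_average_distortion (n : ℕ) (hn : 0 < n) (α : ℝ)
    (hα : α ∈ Set.Ioc (0:ℝ) (1/2)) (hαn : α ≤ 1 / n) :
    2 * (1 - (1 - 2 * α * (1 - α)) ^ n)
        ≤ ∑ b : Fin n → Bool, ∑ b' : Fin n → Bool,
            cubeWeight α b * cubeWeight α b' * ‖sgnVecE b - sgnVecE b'‖ ∧
    2 * n * α * (1 - α) ≤ 2 :=
  identity_map_average_distortion_general n α hα hαn
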